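/- Suppose M₀ ≥ 0 satisfies f(A) − f(B) ≤ M₀ for all A, B ∈ Ω, and suppose β ≥ 768·M₀ with β > 0. Let (X_k)_{k≥0} be a sequence in ℝ^{n×p} such that ‖X₀ᵀX₀ − I_p‖_F ≤ 1/24, h(X_k) ≤ h(X₀) for all k ≥ 0, and ‖X_{k+1} − X_k‖_F ≤ 1/24 for all k ≥ 0. Then ‖X_kᵀX_k − I_p‖_F ≤ 1/12 for all k ≥ 0. -/

import Mathlib

open Matrix

attribute [local instance] Matrix.frobeniusNormedAddCommGroup Matrix.frobeniusNormedSpace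

namespace ExPen

noncomputable def finner {n p : ℕ} (A B : Matrix (Fin n) (Fin p) ℝ) : ℝ := (Aᵀ * B).trace

noncomputable def Phi {p : ℕ} (M : Matrix (Fin p) (Fin p) ℝ) : Matrix (Fin p) (Fin p) ℝ :=
  (1 / 2 : ℝ) • (M + Mᵀ)

noncomputable def Amap {n p : ℕ} (X : Matrix (Fin n) (Fin p) ℝ) : Matrix (Fin p) (Fin p) ℝ :=
  (3 / 2 : ℝ) • (1 : Matrix (Fin p) (Fin p) ℝ) - (1 / 2 : ℝ) • (Xᵀ * X)

noncomputable def g {n p : ℕ} (f : Matrix (Fin n) (Fin p) ℝ → ℝ)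
    (X : Matrix (Fin n) (Fin p) ℝ) : ℝ := f (X * Amap X)

noncomputable def hpen {n p : ℕ} (f : Matrix (Fin n) (Fin p) ℝ → ℝ) (β : ℝ)
    (X : Matrix (Fin n) (Fin p) ℝ) : ℝ := g f X + β / 4 * ‖Xᵀ * X - 1‖ ^ 2

noncomputable def dualCLM {n p : ℕ} (G : Matrix (Fin n) (Fin p) ℝ) :
    Matrix (Fin n) (Fin p) ℝ →L[ℝ] ℝ :=
  LinearMap.toContinuousLinearMap
    { toFun := fun D => (Gᵀ * D).trace
      map_add' := by intro D E; simp [Matrix.mul_add]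
      map_smul' := by intro c D; simp [Matrix.mul_smul] }

def HasGradAt {n p : ℕ} (φ : Matrix (Fin n) (Fin p) ℝ → ℝ)
    (X G : Matrix (Fin n) (Fin p) ℝ) : Prop :=
  HasFDerivAt φ (dualCLM G) X

noncomputable def specNorm {n p : ℕ} (X : Matrix (Fin n) (Fin p) ℝ) : ℝ :=
  ‖LinearMap.toContinuousLinearMap
    (Matrix.toEuclideanLin X : EuclideanSpace ℝ (Fin p) →ₗ[ℝ] EuclideanSpace ℝ (Fin n))‖

lemma posSemidef_tmul {n p : ℕ} (X : Matrix (Fin n) (Fin p) ℝ) : (Xᵀ * X).PosSemidef := by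
  simpa [Matrix.conjTranspose_eq_transpose_of_trivial] using
    Matrix.posSemidef_conjTranspose_mul_self X

noncomputable def psdSqrt {p : ℕ} {A : Matrix (Fin p) (Fin p) ℝ} (hA : A.PosSemidef) :
    Matrix (Fin p) (Fin p) ℝ :=
  (hA.1.eigenvectorUnitary : Matrix (Fin p) (Fin p) ℝ) *
    diagonal ((↑) ∘ (√·) ∘ hA.1.eigenvalues) *
    (star (hA.1.eigenvectorUnitary : Matrix (Fin p) (Fin p) ℝ))

noncomputable def Pst {n p : ℕ} (X : Matrix (Fin n) (Fin p) ℝ) : Matrix (Fin n) (Fin p) ℝ :=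
  X * (psdSqrt (posSemidef_tmul X))⁻¹

/-!
View `X` as the operator `T : ℓ²(Fin p) → ℓ²(Fin n)`, so `XᵀX` is `S = T†T`. The C*-identity gives
`‖T‖² = ‖S‖ ≤ 1 + ‖XᵀX - I‖_F`, so every iterate close to the Stiefel manifold has spectral norm
near 1. If `‖T‖ ≤ 2` then `S ≤ 4`, and `X·A(X)` is a contraction because
`1 - A S A = ¼ (S - 1)(4 - S)(S - 1) ≥ 0`. By induction, `‖X_k‖₂² ≤ 13/12` and a step of length
`1/24` keep `‖X_{k+1}‖₂ ≤ 2`, so both `X_0 A(X_0)` and `X_{k+1} A(X_{k+1})` lie in `Ω`, and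
`h(X_{k+1}) ≤ h(X_0)` yields `(β/4)‖X_{k+1}ᵀX_{k+1} - I‖² ≤ M₀ + (β/4)/24² ≤ (β/4)/12²`.
-/

open scoped InnerProduct ComplexOrder
open ContinuousLinearMap

section Operator

variable {𝕜 E F : Type*} [RCLike 𝕜] [NormedAddCommGroup E] [InnerProductSpace 𝕜 E] [CompleteSpace E]
  [NormedAddCommGroup F] [InnerProductSpace 𝕜 F] [CompleteSpace F]

theorem sq_opNorm_le_one_add_norm_adjoint_comp_self_sub_one (T : E →L[𝕜] F) :
    ‖T‖ ^ 2 ≤ 1 + ‖T† ∘L T - 1‖ := by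
  rw [sq, ← norm_adjoint_comp_self]
  calc ‖T† ∘L T‖ ≤ ‖(1 : E →L[𝕜] E)‖ + ‖T† ∘L T - 1‖ := norm_le_norm_add_norm_sub' _ _
    _ ≤ 1 + ‖T† ∘L T - 1‖ := by gcongr; exact norm_id_le

theorem isPositive_smul_one_sub_adjoint_comp_self (T : E →L[𝕜] F) {c : ℝ} (hc : ‖T‖ ^ 2 ≤ c) :
    ((c : 𝕜) • 1 - T† ∘L T).IsPositive := by
  refine isPositive_def'.2 ⟨?_, fun x => ?_⟩
  · exact ((show IsSelfAdjoint (c : 𝕜) from RCLike.conj_ofReal c).smul (.one _)).sub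
      (isPositive_adjoint_comp_self T).isSelfAdjoint
  · rw [reApplyInnerSelf_apply, _root_.sub_apply, inner_sub_left, map_sub,
      ← apply_norm_sq_eq_inner_adjoint_left, _root_.smul_apply, inner_smul_left,
      one_apply_eq_self, RCLike.conj_ofReal, RCLike.re_ofReal_mul, inner_self_eq_norm_sq,
      sub_nonneg]
    calc ‖T x‖ ^ 2 ≤ (‖T‖ * ‖x‖) ^ 2 := by gcongr; exact T.le_opNorm x
      _ ≤ c * ‖x‖ ^ 2 := by rw [mul_pow]; gcongr

theorem norm_comp_newtonSchulz_le_one (T : E →L[𝕜] F) (hT : ‖T‖ ≤ 2) :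
    ‖T ∘L ((3 / 2 : 𝕜) • 1 - (1 / 2 : 𝕜) • (T† ∘L T))‖ ≤ 1 := by
  set S := T† ∘L T with hS_def
  set A := (3 / 2 : 𝕜) • 1 - (1 / 2 : 𝕜) • S with hA_def
  have hS : IsSelfAdjoint S := (isPositive_adjoint_comp_self T).isSelfAdjoint
  have hA : IsSelfAdjoint A :=
    (((IsSelfAdjoint.ofNat 3).div (.ofNat 2)).smul (.one _)).sub
      (((IsSelfAdjoint.one 𝕜).div (.ofNat 2)).smul hS)
  have h4S : (((4 : ℝ) : 𝕜) • 1 - S).IsPositive :=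
    isPositive_smul_one_sub_adjoint_comp_self T (by nlinarith [norm_nonneg T])
  have hpos : (1 - A * S * A).IsPositive := by
    have key : 1 - A * S * A = (1 / 4 : 𝕜) • ((S - 1) * (((4 : ℝ) : 𝕜) • 1 - S) * (S - 1)) := by
      simp only [hA_def]
      push_cast
      noncomm_ring
      module
    rw [key, mul_assoc]
    have := h4S.conj_adjoint (S - 1)
    rw [(hS.sub (.one _)).adjoint_eq] at this
    exact this.smul_of_nonneg (by positivity)
  refine opNorm_le_bound _ zero_le_one fun v => ?_
  rw [one_mul, ← sq_le_sq₀ (norm_nonneg _) (norm_nonneg _), ContinuousLinearMap.comp_apply,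
    apply_norm_sq_eq_inner_adjoint_left, ← hS_def, ← adjoint_inner_left, hA.adjoint_eq]
  have := hpos.re_inner_nonneg_left v
  rw [_root_.sub_apply, inner_sub_left, map_sub, one_apply_eq_self, inner_self_eq_norm_sq] at this
  exact sub_nonneg.1 this

end Operator

section Matrix

variable {l m n : ℕ}

noncomputable def toL2CLM :
    Matrix (Fin m) (Fin n) ℝ ≃ₗ[ℝ] (EuclideanSpace ℝ (Fin n) →L[ℝ] EuclideanSpace ℝ (Fin m)) :=
  Matrix.toEuclideanLin.trans LinearMap.toContinuousLinearMap

theorem toL2CLM_apply (X : Matrix (Fin m) (Fin n) ℝ) (v : EuclideanSpace ℝ (Fin n)) :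
    toL2CLM X v = WithLp.toLp 2 (X *ᵥ v.ofLp) := rfl

theorem specNorm_eq_norm_toL2CLM (X : Matrix (Fin m) (Fin n) ℝ) : specNorm X = ‖toL2CLM X‖ := rfl

theorem toL2CLM_mul (X : Matrix (Fin l) (Fin m) ℝ) (Y : Matrix (Fin m) (Fin n) ℝ) :
    toL2CLM (X * Y) = toL2CLM X ∘L toL2CLM Y := by
  ext1 v
  simp [toL2CLM_apply]

theorem toL2CLM_transpose (X : Matrix (Fin m) (Fin n) ℝ) : toL2CLM Xᵀ = (toL2CLM X)† := by
  rw [← conjTranspose_eq_transpose_of_trivial, toL2CLM, LinearEquiv.trans_apply,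
    toEuclideanLin_conjTranspose_eq_adjoint, LinearMap.adjoint_toContinuousLinearMap]
  rfl

theorem toL2CLM_one : toL2CLM (1 : Matrix (Fin n) (Fin n) ℝ) = 1 := by
  ext1 v; simp [toL2CLM_apply]

theorem specNorm_le_frobenius (X : Matrix (Fin m) (Fin n) ℝ) : specNorm X ≤ ‖X‖ := by
  refine opNorm_le_bound _ (norm_nonneg X) fun v => ?_
  calc ‖toL2CLM X v‖ = ‖X * replicateCol (Fin 1) v.ofLp‖ := by
        rw [← replicateCol_mulVec]; exact (frobenius_norm_replicateCol _).symm
    _ ≤ ‖X‖ * ‖replicateCol (Fin 1) v.ofLp‖ := frobenius_norm_mul _ _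
    _ = ‖X‖ * ‖v‖ := congrArg (‖X‖ * ·) (frobenius_norm_replicateCol _)

theorem specNorm_nonneg (X : Matrix (Fin m) (Fin n) ℝ) : 0 ≤ specNorm X := norm_nonneg _

theorem specNorm_le_add_frobenius_sub (X Y : Matrix (Fin m) (Fin n) ℝ) :
    specNorm Y ≤ specNorm X + ‖Y - X‖ := by
  calc specNorm Y ≤ specNorm X + specNorm (Y - X) := by
        simpa only [specNorm_eq_norm_toL2CLM, map_sub] using norm_le_norm_add_norm_sub' _ _
    _ ≤ specNorm X + ‖Y - X‖ := by gcongr; exact specNorm_le_frobenius _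

theorem sq_specNorm_le_one_add_norm_gram_sub_one (X : Matrix (Fin m) (Fin n) ℝ) :
    specNorm X ^ 2 ≤ 1 + ‖Xᵀ * X - 1‖ := by
  calc specNorm X ^ 2 ≤ 1 + specNorm (Xᵀ * X - 1) := by
        simpa only [specNorm_eq_norm_toL2CLM, map_sub, toL2CLM_mul, toL2CLM_transpose,
          toL2CLM_one] using sq_opNorm_le_one_add_norm_adjoint_comp_self_sub_one (toL2CLM X)
    _ ≤ 1 + ‖Xᵀ * X - 1‖ := by gcongr; exact specNorm_le_frobenius _

theorem specNorm_mul_Amap_le_one {X : Matrix (Fin m) (Fin n) ℝ} (hX : specNorm X ≤ 2) :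
    specNorm (X * Amap X) ≤ 1 := by
  simpa only [specNorm_eq_norm_toL2CLM, Amap, toL2CLM_mul, map_sub, map_smul, toL2CLM_transpose,
    toL2CLM_one] using norm_comp_newtonSchulz_le_one (toL2CLM X) hX

end Matrix

theorem norm_gram_sub_one_le_of_hpen_le {m n : ℕ} {f : Matrix (Fin m) (Fin n) ℝ → ℝ} {β M₀ : ℝ}
    (hosc : ∀ A B : Matrix (Fin m) (Fin n) ℝ, specNorm A ≤ 13 / 12 →
      specNorm B ≤ 13 / 12 → f A - f B ≤ M₀)
    (hβ : 768 * M₀ ≤ β) (hβ0 : 0 < β) {Y Z : Matrix (Fin m) (Fin n) ℝ}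
    (hY : specNorm Y ≤ 2) (hZ : ‖Zᵀ * Z - 1‖ ≤ 1 / 24) (hYZ : hpen f β Y ≤ hpen f β Z) :
    ‖Yᵀ * Y - 1‖ ≤ 1 / 12 := by
  have hZ2 : specNorm Z ≤ 2 := by
    nlinarith [sq_specNorm_le_one_add_norm_gram_sub_one Z, specNorm_nonneg Z]
  have hf : f (Z * Amap Z) - f (Y * Amap Y) ≤ M₀ :=
    hosc _ _ ((specNorm_mul_Amap_le_one hZ2).trans (by norm_num))
      ((specNorm_mul_Amap_le_one hY).trans (by norm_num))
  have hZsq : ‖Zᵀ * Z - 1‖ ^ 2 ≤ (1 / 24) ^ 2 := by gcongr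
  have hYsq : β * ‖Yᵀ * Y - 1‖ ^ 2 ≤ β * (1 / 12) ^ 2 := by
    simp only [hpen, g] at hYZ
    linarith [mul_le_mul_of_nonneg_left hZsq hβ0.le]
  exact (pow_le_pow_iff_left₀ (norm_nonneg _) (by norm_num) two_ne_zero).1
    (le_of_mul_le_mul_left hYsq hβ0)

theorem statement_19_general {n p : ℕ} (f : Matrix (Fin n) (Fin p) ℝ → ℝ) (β M₀ : ℝ)
    (hosc : ∀ A B : Matrix (Fin n) (Fin p) ℝ, specNorm A ≤ 13 / 12 →
      specNorm B ≤ 13 / 12 → f A - f B ≤ M₀)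
    (hβ : 768 * M₀ ≤ β) (hβ0 : 0 < β)
    (X : ℕ → Matrix (Fin n) (Fin p) ℝ)
    (hX0 : ‖(X 0)ᵀ * X 0 - 1‖ ≤ 1 / 24)
    (hdec : ∀ k : ℕ, hpen f β (X k) ≤ hpen f β (X 0))
    (hstep : ∀ k : ℕ, ‖X (k + 1) - X k‖ ≤ 1 / 24) :
    ∀ k : ℕ, ‖(X k)ᵀ * X k - 1‖ ≤ 1 / 12 := by
  intro k
  induction k with
  | zero => linarith
  | succ k ih =>
    refine norm_gram_sub_one_le_of_hpen_le hosc hβ hβ0 ?_ hX0 (hdec (k + 1))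
    have hXk : specNorm (X k) ^ 2 ≤ 13 / 12 := by
      linarith [sq_specNorm_le_one_add_norm_gram_sub_one (X k)]
    nlinarith [specNorm_le_add_frobenius_sub (X k) (X (k + 1)), hstep k, specNorm_nonneg (X k)]

theorem statement_19 {n p : ℕ} (f : Matrix (Fin n) (Fin p) ℝ → ℝ) (β M₀ : ℝ)
    (hM₀ : 0 ≤ M₀)
    (hosc : ∀ A B : Matrix (Fin n) (Fin p) ℝ, specNorm A ≤ 13 / 12 →
      specNorm B ≤ 13 / 12 → f A - f B ≤ M₀)
    (hβ : 768 * M₀ ≤ β) (hβ0 : 0 < β)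
    (X : ℕ → Matrix (Fin n) (Fin p) ℝ)
    (hX0 : ‖(X 0)ᵀ * X 0 - 1‖ ≤ 1 / 24)
    (hdec : ∀ k : ℕ, hpen f β (X k) ≤ hpen f β (X 0))
    (hstep : ∀ k : ℕ, ‖X (k + 1) - X k‖ ≤ 1 / 24) :
    ∀ k : ℕ, ‖(X k)ᵀ * X k - 1‖ ≤ 1 / 12 :=
  statement_19_general f β M₀ hosc hβ hβ0 X hX0 hdec hstep

end ExPen
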